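/- arXiv:1307.0733 — 5 statements merged into one kernel-verified Lean document; each statement's English description precedes it below -/
import Mathlib

section
/- Let F be a field of characteristic 0 and let A be an algebra over F. Then for every n ≥ 1, dim_F P_n(F)/(P_n(F) ∩ Id(A,F)) ≤ rank of the finitely generated free abelian group P_n(ℤ)/(P_n(ℤ) ∩ Id(A,ℤ)). Moreover, if F = ℚ then equality holds: dim_ℚ P_n(ℚ)/(P_n(ℚ) ∩ Id(A,ℚ)) = rank P_n(ℤ)/(P_n(ℤ) ∩ Id(A,ℤ)). -/
/-- Left-normed product `v 0 * v 1 * ⋯ * v n` of a nonempty family in a (possibly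
non-unital) multiplicative structure. -/
def mprod {A : Type*} [Mul A] : {n : ℕ} → (Fin (n + 1) → A) → A
  | 0, v => v 0
  | _ + 1, v => mprod (fun i => v i.castSucc) * v (Fin.last _)

/-- The group `P_{n+1}(ℤ)` of multilinear polynomials with integer coefficients in the
variables `x_1, …, x_{n+1}`: the free abelian group on the monomials
`x_{σ(1)} ⋯ x_{σ(n+1)}`, `σ ∈ S_{n+1}`. -/
abbrev PZ (n : ℕ) : Type := Equiv.Perm (Fin (n + 1)) →₀ ℤ

/-- Evaluation of a multilinear integer polynomial at the tuple `v` in a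
(not necessarily unital) ring `A`, as a `ℤ`-linear map. -/
noncomputable def evalZ (A : Type*) [NonUnitalRing A] {n : ℕ} (v : Fin (n + 1) → A) :
    PZ n →ₗ[ℤ] A :=
  Finsupp.lift A ℤ (Equiv.Perm (Fin (n + 1))) (fun σ => mprod (fun i => v (σ i)))

/-- `P_{n+1}(ℤ) ∩ Id(A, ℤ)`: the multilinear polynomial identities of `A`
with integer coefficients. -/
noncomputable def IdZ (A : Type*) [NonUnitalRing A] (n : ℕ) : AddSubgroup (PZ n) where
  carrier := {f | ∀ v : Fin (n + 1) → A, evalZ A v f = 0}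
  zero_mem' := fun v => map_zero _
  add_mem' := fun hf hg v => by rw [map_add, hf v, hg v, add_zero]
  neg_mem' := fun hf v => by rw [map_neg, hf v, neg_zero]

/-- The space `P_{n+1}(F)` of multilinear polynomials with coefficients in `F`. -/
abbrev PF (F : Type*) [Field F] (n : ℕ) := Equiv.Perm (Fin (n + 1)) →₀ F

/-- Evaluation of a multilinear polynomial over `F` in an `F`-algebra `B`
(possibly non-unital), as an `F`-linear map. -/
noncomputable def evalF (F : Type*) [Field F] {B : Type*} [NonUnitalRing B] [Module F B]
    {n : ℕ} (v : Fin (n + 1) → B) : PF F n →ₗ[F] B :=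
  Finsupp.lift B F (Equiv.Perm (Fin (n + 1))) (fun σ => mprod (fun i => v (σ i)))

/-- `P_{n+1}(F) ∩ Id(B, F)`: the multilinear polynomial identities of `B`
with coefficients in `F`. -/
noncomputable def IdF (F : Type*) [Field F] (B : Type*) [NonUnitalRing B] [Module F B]
    (n : ℕ) : Submodule F (PF F n) where
  carrier := {f | ∀ v : Fin (n + 1) → B, evalF F v f = 0}
  zero_mem' := fun v => map_zero _
  add_mem' := fun hf hg v => by rw [map_add, hf v, hg v, add_zero]
  smul_mem' := fun c f hf v => by rw [map_smul, hf v, smul_zero]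

/-!
Evaluating at all tuples identifies `P(R) / (P(R) ∩ Id(A, R))` with the `R`-span of the
monomial functions `v ↦ v_{σ(1)} ⋯ v_{σ(n+1)}` on `A^{n+1}`, a finite set `S` of functions.
In a vector space over a field `F` of characteristic `0`, the group `span ℤ S` is free of finite
rank, and a `ℤ`-basis of it spans `span F S`; this gives the inequality. Over `ℚ`,
`span ℚ S` is the localization of `span ℤ S` at `ℤ ∖ {0}`, which has the same rank.
-/

open Module Submodule

namespace Submodule

variable {V : Type*} [AddCommGroup V]

theorem finrank_span_le_finrank_span_int (F : Type*) [Field F] [CharZero F] [Module F V]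
    {S : Set V} (hS : S.Finite) : finrank F (span F S) ≤ finrank ℤ (span ℤ S) := by
  have : IsAddTorsionFree V := .of_isTorsionFree F V
  have : Module.Finite ℤ (span ℤ S) := .span_of_finite ℤ hS
  let b := Module.Free.chooseBasis ℤ (span ℤ S)
  have hT : span ℤ (Set.range ((span ℤ S).subtype ∘ b)) = span ℤ S := by
    rw [Set.range_comp, ← map_span, b.span_eq, map_top, range_subtype]
  set T := Set.range ((span ℤ S).subtype ∘ b)
  have : Module.Finite F (span F T) := .span_of_finite F (Set.finite_range _)
  have hST : span F S ≤ span F T :=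
    span_le.2 fun x hx => span_le_restrictScalars ℤ F T (hT ▸ subset_span hx)
  calc finrank F (span F S) ≤ finrank F (span F T) := finrank_mono hST
    _ ≤ Fintype.card _ := finrank_range_le_card _
    _ = finrank ℤ (span ℤ S) := (finrank_eq_card_chooseBasisIndex ℤ _).symm

theorem finrank_span_rat_eq_finrank_span_int [Module ℚ V] (S : Set V) :
    finrank ℚ (span ℚ S) = finrank ℤ (span ℤ S) := by
  have := isLocalizedModule_id (nonZeroDivisors ℤ) V ℚ
  have hloc := IsLocalizedModule.finrank_eq (nonZeroDivisors ℤ)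
    ((span ℤ S).toLocalized' ℚ (nonZeroDivisors ℤ) LinearMap.id) le_rfl
  rw [localized'_span, LinearMap.id_coe, Set.image_id] at hloc
  rw [IsFractionRing.finrank_right_eq ℤ ℚ, ← hloc]

end Submodule

theorem Finsupp.finrank_quotient_ker_linearCombination (R : Type*) [Ring R] {ι M : Type*}
    [AddCommGroup M] [Module R M] (v : ι → M) :
    finrank R ((ι →₀ R) ⧸ LinearMap.ker (Finsupp.linearCombination R v)) =
      finrank R (span R (Set.range v)) := by
  rw [← Finsupp.range_linearCombination]
  exact (LinearMap.quotKerEquivRange _).finrank_eq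

def monomialFun (A : Type*) [Mul A] (n : ℕ) :
    Equiv.Perm (Fin (n + 1)) → (Fin (n + 1) → A) → A :=
  fun σ v => mprod (fun i => v (σ i))

theorem linearCombination_monomialFun_apply (R : Type*) [CommSemiring R] {A : Type*}
    [NonUnitalNonAssocSemiring A] [Module R A] {n : ℕ} (f : Equiv.Perm (Fin (n + 1)) →₀ R)
    (v : Fin (n + 1) → A) :
    Finsupp.linearCombination R (monomialFun A n) f v =
      Finsupp.lift A R _ (fun σ => mprod (fun i => v (σ i))) f := by
  simp [Finsupp.linearCombination_apply, Finsupp.sum, monomialFun]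

theorem IdF_eq_ker (F : Type*) [Field F] (A : Type*) [NonUnitalRing A] [Module F A] (n : ℕ) :
    IdF F A n = LinearMap.ker (Finsupp.linearCombination F (monomialFun A n)) := by
  ext f
  simp only [LinearMap.mem_ker, funext_iff, linearCombination_monomialFun_apply]
  rfl

theorem toIntSubmodule_IdZ_eq_ker (A : Type*) [NonUnitalRing A] (n : ℕ) :
    (IdZ A n).toIntSubmodule = LinearMap.ker (Finsupp.linearCombination ℤ (monomialFun A n)) := by
  ext f
  simp only [LinearMap.mem_ker, funext_iff, linearCombination_monomialFun_apply]
  rfl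

theorem finrank_PF_quotient_IdF (F : Type*) [Field F] (A : Type*) [NonUnitalRing A] [Module F A]
    (n : ℕ) :
    finrank F (PF F n ⧸ IdF F A n) = finrank F (span F (Set.range (monomialFun A n))) := by
  rw [IdF_eq_ker, Finsupp.finrank_quotient_ker_linearCombination]

theorem finrank_PZ_quotient_IdZ (A : Type*) [NonUnitalRing A] (n : ℕ) :
    finrank ℤ (PZ n ⧸ IdZ A n) = finrank ℤ (span ℤ (Set.range (monomialFun A n))) := by
  rw [← Finsupp.finrank_quotient_ker_linearCombination, ← toIntSubmodule_IdZ_eq_ker]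
  -- the quotient by an additive subgroup is definitionally that by its `ℤ`-submodule
  rfl

theorem stmt_1 (A : Type) [Ring A] (n : ℕ) :
    (∀ (F : Type) [Field F] [Algebra F A], CharP F 0 →
      Module.finrank F (PF F n ⧸ IdF F A n) ≤ Module.finrank ℤ (PZ n ⧸ IdZ A n)) ∧
    (∀ [Algebra ℚ A],
      Module.finrank ℚ (PF ℚ n ⧸ IdF ℚ A n) = Module.finrank ℤ (PZ n ⧸ IdZ A n)) := by
  refine ⟨fun F _ _ hF => ?_, fun {_} => ?_⟩
  · have : CharZero F := CharP.charP_to_charZero F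
    rw [finrank_PF_quotient_IdF, finrank_PZ_quotient_IdZ]
    exact finrank_span_le_finrank_span_int F (Set.finite_range _)
  · rw [finrank_PF_quotient_IdF, finrank_PZ_quotient_IdZ]
    exact finrank_span_rat_eq_finrank_span_int _
end

section
/- Let R be a ring (not necessarily unital) and let F be a field of characteristic 0. Then for every n ≥ 1, dim_F P_n(F)/(P_n(F) ∩ Id(R ⊗_ℤ F, F)) equals the rank of the finitely generated free abelian group P_n(ℤ)/(P_n(ℤ) ∩ Id(R/Tor R, ℤ)), where Tor R = {r ∈ R : m·r = 0 for some positive integer m} is the torsion ideal of R. -/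
open scoped TensorProduct

-- Note: we realize the `F`-algebra `R ⊗_ℤ F` as `F ⊗[ℤ] R` (the same tensor product
-- with the factors written in the other order), which carries the standard
-- non-unital ring and `F`-module structures in Mathlib.

/-- `P_{n+1}(ℤ) ∩ Id(R/Tor R, ℤ)`: the multilinear integer polynomials all of whose
evaluations on `R` land in the torsion ideal `Tor R`; equivalently, the multilinear
identities of the quotient ring `R/Tor R`. -/
noncomputable def IdZModTor (R : Type*) [NonUnitalRing R] (n : ℕ) : AddSubgroup (PZ n) where
  carrier := {f | ∀ v : Fin (n + 1) → R, evalZ R v f ∈ Submodule.torsion ℤ R}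
  zero_mem' := fun v => by rw [map_zero]; exact zero_mem _
  add_mem' := fun hf hg v => by rw [map_add]; exact add_mem (hf v) (hg v)
  neg_mem' := fun hf v => by rw [map_neg]; exact neg_mem (hf v)

noncomputable example (R F : Type) [NonUnitalRing R] [Field F] : NonUnitalRing (F ⊗[ℤ] R) :=
  inferInstance
noncomputable example (R F : Type) [NonUnitalRing R] [Field F] : Module F (F ⊗[ℤ] R) :=
  inferInstance

/-!
The quotient `Q = P_n(ℤ) ⧸ (P_n(ℤ) ∩ Id(R/Tor R, ℤ))` is torsion-free and finitely generated,
hence free. Under `F ⊗ P_n(ℤ) ≅ P_n(F)`, the identities of `F ⊗ R` are exactly the `F`-span of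
`P_n(ℤ) ∩ Id(R/Tor R, ℤ)`: such integral polynomials are identities of `F ⊗ R` because `F ⊗ R` is
spanned over `F` by `1 ⊗ R` and `F` kills torsion; conversely, the coordinates of an identity of
`F ⊗ R` in a `ℚ`-basis of `F` vanish on `1 ⊗ R ⊆ ℚ ⊗ R`, so after clearing denominators they are
integral identities of `R` modulo torsion. Right exactness of `F ⊗ -` then gives
`P_n(F) ⧸ Id ≅ F ⊗ Q`, whose dimension is the rank of `Q`.
-/

section Multilinear

variable (K : Type*) [CommSemiring K] (A : Type*) [NonUnitalNonAssocSemiring A] [Module K A]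
  [SMulCommClass K A A] [IsScalarTower K A A]

def mprodMultilinear : (n : ℕ) → MultilinearMap K (fun _ : Fin (n + 1) => A) A
  | 0 => MultilinearMap.ofSubsingleton K A A (0 : Fin 1) LinearMap.id
  | n + 1 => ((LinearMap.mul K A).compMultilinearMap (mprodMultilinear n)).uncurryRight

variable {K A}

@[simp]
theorem mprodMultilinear_apply {n : ℕ} (v : Fin (n + 1) → A) :
    mprodMultilinear K A n v = mprod v := by
  induction n with
  | zero => rfl
  | succ n ih =>
    rw [mprodMultilinear, MultilinearMap.uncurryRight_apply]
    exact congrArg (· * _) (ih _)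

end Multilinear

theorem MultilinearMap.eq_zero_of_forall_one_tmul {R A ι : Type*} {M : ι → Type*} {P : Type*}
    [CommSemiring R] [CommSemiring A] [Algebra R A] [Fintype ι] [DecidableEq ι]
    [∀ i, AddCommMonoid (M i)] [∀ i, Module R (M i)] [AddCommMonoid P] [Module A P]
    (g : MultilinearMap A (fun i => A ⊗[R] M i) P)
    (h : ∀ m : ∀ i, M i, g (fun i => 1 ⊗ₜ m i) = 0) : g = 0 := by
  ext v
  choose S hS using fun i => TensorProduct.exists_finset (v i)
  have hpure : ∀ (i : ι) (p : A × M i), p.1 ⊗ₜ[R] p.2 = p.1 • (1 : A) ⊗ₜ[R] p.2 := fun i p => by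
    rw [TensorProduct.smul_tmul', smul_eq_mul, mul_one]
  simp only [funext hS, hpure, g.map_sum_finset, g.map_smul_univ, h, smul_zero,
    Finset.sum_const_zero, zero_apply]

section Torsion

variable {M : Type*} [AddCommGroup M]

theorem tmul_eq_zero_of_mem_torsion {F : Type*} [DivisionRing F] [CharZero F] (a : F) {t : M}
    (ht : t ∈ Submodule.torsion ℤ M) : a ⊗ₜ[ℤ] t = 0 := by
  obtain ⟨m, hm⟩ := ht
  have hm₀ : ((m : ℤ) : F) ≠ 0 := Int.cast_ne_zero.mpr (nonZeroDivisors.coe_ne_zero m)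
  calc a ⊗ₜ[ℤ] t = ((m : ℤ) • (((m : ℤ) : F)⁻¹ * a)) ⊗ₜ[ℤ] t := by
        rw [zsmul_eq_mul, ← mul_assoc, mul_inv_cancel₀ hm₀, one_mul]
    _ = 0 := by rw [TensorProduct.smul_tmul, ← Submonoid.smul_def, hm, TensorProduct.tmul_zero]

theorem rat_one_tmul_eq_zero_iff {t : M} :
    (1 : ℚ) ⊗ₜ[ℤ] t = 0 ↔ t ∈ Submodule.torsion ℤ M := by
  refine ⟨fun h => ?_, tmul_eq_zero_of_mem_torsion 1⟩
  have : IsLocalizedModule (nonZeroDivisors ℤ) (TensorProduct.mk ℤ ℚ M 1) :=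
    (isLocalizedModule_iff_isBaseChange _ ℚ _).mpr (TensorProduct.isBaseChange ℤ M ℚ)
  exact (IsLocalizedModule.eq_zero_iff (nonZeroDivisors ℤ) (TensorProduct.mk ℤ ℚ M 1)).mp h

end Torsion

theorem Finsupp.exists_mapRange_intCast_eq_smul {S : Type*} (q : S →₀ ℚ) :
    ∃ m : ℤ, m ≠ 0 ∧ ∃ f : S →₀ ℤ, f.mapRange (Int.cast : ℤ → ℚ) Int.cast_zero = m • q := by
  obtain ⟨m, hm⟩ := IsLocalization.exist_integer_multiples (nonZeroDivisors ℤ) q.support q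
  refine ⟨m, nonZeroDivisors.coe_ne_zero m, q.mapRange (fun x => ((m : ℤ) • x).num) (by simp), ?_⟩
  ext σ
  by_cases hσ : σ ∈ q.support
  · obtain ⟨z, hz⟩ := hm σ hσ
    rw [Finsupp.mapRange_apply, Finsupp.mapRange_apply, Finsupp.smul_apply, ← hz]
    simp
  · simp [Finsupp.notMem_support_iff.mp hσ]

theorem Module.Basis.exists_eq_sum_smul_mapRange_coord {K L S ι : Type*} [Field K] [Field L] [Algebra K L]
    (b : Module.Basis ι K L) (g : S →₀ L) :
    ∃ J : Finset ι, g = ∑ j ∈ J, b j • (g.mapRange (b.coord j) (map_zero _)).mapRange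
      (algebraMap K L) (map_zero _) := by
  classical
  refine ⟨g.support.biUnion fun σ => (b.repr (g σ)).support, ?_⟩
  ext σ
  have hsub : (b.repr (g σ)).support ⊆ g.support.biUnion fun σ => (b.repr (g σ)).support := by
    intro j hj
    by_cases hσ : σ ∈ g.support
    · exact Finset.mem_biUnion.mpr ⟨σ, hσ, hj⟩
    · simp [Finsupp.notMem_support_iff.mp hσ] at hj
  conv_lhs => rw [← b.linearCombination_repr (g σ), Finsupp.linearCombination_apply,
    Finsupp.sum_of_support_subset _ hsub _ (by simp)]
  simp [Finsupp.finsetSum_apply, Algebra.smul_def, mul_comm]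

section Evaluation

variable {n : ℕ}

theorem mprod_one_tmul {A R : Type*} [Ring A] [NonUnitalRing R] (r : Fin (n + 1) → R) :
    mprod (fun i => (1 : A) ⊗ₜ[ℤ] r i) = 1 ⊗ₜ[ℤ] mprod r := by
  induction n with
  | zero => rfl
  | succ n ih => rw [mprod, mprod, ih, Algebra.TensorProduct.tmul_mul_tmul, mul_one]

theorem evalZ_one_tmul {A R : Type*} [Ring A] [NonUnitalRing R] (r : Fin (n + 1) → R)
    (f : PZ n) : evalZ (A ⊗[ℤ] R) (fun i => (1 : A) ⊗ₜ[ℤ] r i) f = 1 ⊗ₜ[ℤ] evalZ R r f := by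
  simp only [evalZ, Finsupp.lift_apply, Finsupp.sum, TensorProduct.tmul_sum,
    TensorProduct.tmul_smul, mprod_one_tmul]

theorem evalF_mapRange_intCast (F : Type*) [Field F] {B : Type*} [NonUnitalRing B] [Module F B]
    (v : Fin (n + 1) → B) (f : PZ n) :
    evalF F v (f.mapRange (Int.cast : ℤ → F) Int.cast_zero) = evalZ B v f := by
  simp only [evalF, evalZ, Finsupp.lift_apply]
  rw [Finsupp.sum_mapRange_index (by simp)]
  exact Finsupp.sum_congr fun σ _ => Int.cast_smul_eq_zsmul F _ _

theorem evalF_one_tmul_mapRange_intCast {K R : Type*} [Field K] [NonUnitalRing R]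
    (r : Fin (n + 1) → R) (f : PZ n) :
    evalF K (fun i => (1 : K) ⊗ₜ[ℤ] r i) (f.mapRange (Int.cast : ℤ → K) Int.cast_zero) =
      1 ⊗ₜ[ℤ] evalZ R r f := by
  rw [evalF_mapRange_intCast, evalZ_one_tmul]

theorem evalF_one_tmul {K R : Type*} [Field K] [NonUnitalRing R] (r : Fin (n + 1) → R)
    (q : PF K n) :
    evalF K (fun i => (1 : K) ⊗ₜ[ℤ] r i) q = q.sum fun σ c => c ⊗ₜ[ℤ] mprod fun i => r (σ i) := by
  simp only [evalF, Finsupp.lift_apply, mprod_one_tmul, TensorProduct.smul_tmul', smul_eq_mul,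
    mul_one]

theorem rTensor_evalF_one_tmul {K L R : Type*} [Field K] [Field L] [NonUnitalRing R]
    (π : K →ₗ[ℤ] L) (r : Fin (n + 1) → R) (q : PF K n) :
    π.rTensor R (evalF K (fun i => (1 : K) ⊗ₜ[ℤ] r i) q) =
      evalF L (fun i => (1 : L) ⊗ₜ[ℤ] r i) (q.mapRange π π.map_zero) := by
  rw [evalF_one_tmul, evalF_one_tmul, map_finsuppSum, Finsupp.sum_mapRange_index (by simp)]
  rfl

noncomputable def evalFMultilinear (F : Type*) [Field F] (B : Type*) [NonUnitalRing B]
    [Module F B] [SMulCommClass F B B] [IsScalarTower F B B] (g : PF F n) :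
    MultilinearMap F (fun _ : Fin (n + 1) => B) B :=
  g.sum fun σ c => c • (mprodMultilinear F B n).domDomCongr σ

theorem evalFMultilinear_apply (F : Type*) [Field F] {B : Type*} [NonUnitalRing B] [Module F B]
    [SMulCommClass F B B] [IsScalarTower F B B] (g : PF F n) (v : Fin (n + 1) → B) :
    evalFMultilinear F B g v = evalF F v g := by
  simp [evalFMultilinear, evalF, Finsupp.lift_apply, Finsupp.sum]

end Evaluation

section IdentitiesOverF

variable {R F : Type*} [NonUnitalRing R] [Field F] {n : ℕ}

theorem mem_IdF_iff_forall_one_tmul {g : PF F n} :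
    g ∈ IdF F (F ⊗[ℤ] R) n ↔ ∀ r : Fin (n + 1) → R, evalF F (fun i => (1 : F) ⊗ₜ[ℤ] r i) g = 0 := by
  refine ⟨fun hg r => hg _, fun h v => ?_⟩
  have hzero : evalFMultilinear F (F ⊗[ℤ] R) g = 0 :=
    MultilinearMap.eq_zero_of_forall_one_tmul _ fun r => by rw [evalFMultilinear_apply, h r]
  rw [← evalFMultilinear_apply, hzero, zero_apply]

theorem mapRange_intCast_mem_IdF [CharZero F] {f : PZ n} (hf : f ∈ IdZModTor R n) :
    f.mapRange (Int.cast : ℤ → F) Int.cast_zero ∈ IdF F (F ⊗[ℤ] R) n :=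
  mem_IdF_iff_forall_one_tmul.mpr fun r => by
    rw [evalF_one_tmul_mapRange_intCast]
    exact tmul_eq_zero_of_mem_torsion 1 (hf r)

theorem exists_mem_IdZModTor_mapRange_intCast_eq_smul {q : PF ℚ n}
    (hq : ∀ r : Fin (n + 1) → R, evalF ℚ (fun i => (1 : ℚ) ⊗ₜ[ℤ] r i) q = 0) :
    ∃ m : ℤ, m ≠ 0 ∧ ∃ f ∈ IdZModTor R n, f.mapRange (Int.cast : ℤ → ℚ) Int.cast_zero = m • q := by
  obtain ⟨m, hm, f, hf⟩ := q.exists_mapRange_intCast_eq_smul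
  refine ⟨m, hm, f, fun r => ?_, hf⟩
  rw [← rat_one_tmul_eq_zero_iff, ← evalF_one_tmul_mapRange_intCast, hf, map_zsmul, hq r,
    smul_zero]

theorem mem_span_mapRange_intCast_of_mem_IdF [CharZero F] {g : PF F n}
    (hg : g ∈ IdF F (F ⊗[ℤ] R) n) :
    g ∈ Submodule.span F
      ((fun f : PZ n => f.mapRange (Int.cast : ℤ → F) Int.cast_zero) '' IdZModTor R n) := by
  let b := Module.Basis.ofVectorSpace ℚ F
  obtain ⟨J, hJ⟩ := b.exists_eq_sum_smul_mapRange_coord g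
  rw [hJ]
  refine Submodule.sum_mem _ fun j _ => Submodule.smul_mem _ _ ?_
  obtain ⟨m, hm, f, hf, hfq⟩ := exists_mem_IdZModTor_mapRange_intCast_eq_smul (R := R)
    (q := g.mapRange (b.coord j) (map_zero _)) fun r =>
      (rTensor_evalF_one_tmul ((b.coord j).restrictScalars ℤ) r g).symm.trans <| by
        rw [mem_IdF_iff_forall_one_tmul.mp hg r, map_zero]
  have hcast : (g.mapRange (b.coord j) (map_zero _)).mapRange (algebraMap ℚ F) (map_zero _) =
      ((m : F)⁻¹) • f.mapRange (Int.cast : ℤ → F) Int.cast_zero := by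
    ext σ
    have := congrArg (fun p : PF ℚ n => (p σ : F)) hfq
    simp only [Finsupp.mapRange_apply, Finsupp.smul_apply, Rat.cast_intCast, zsmul_eq_mul,
      Rat.cast_mul] at this
    simp only [Finsupp.mapRange_apply, Finsupp.smul_apply, smul_eq_mul, this, eq_ratCast]
    field_simp
  rw [hcast]
  exact Submodule.smul_mem _ _ (Submodule.subset_span ⟨f, hf, rfl⟩)

end IdentitiesOverF

section Assembly

variable {R F : Type*} [NonUnitalRing R] [Field F] {n : ℕ}

theorem IdZModTor_toIntSubmodule_eq_ker :
    (IdZModTor R n).toIntSubmodule =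
      LinearMap.ker (LinearMap.pi fun v => (Submodule.torsion ℤ R).mkQ ∘ₗ evalZ R v) := by
  ext f
  simp only [LinearMap.mem_ker, funext_iff, LinearMap.pi_apply, LinearMap.comp_apply,
    Submodule.mkQ_apply, Submodule.Quotient.mk_eq_zero, Pi.zero_apply]
  rfl

instance : Module.IsTorsionFree ℤ (PZ n ⧸ (IdZModTor R n).toIntSubmodule) := by
  rw [IdZModTor_toIntSubmodule_eq_ker]
  exact (LinearMap.quotKerEquivRange _).injective.moduleIsTorsionFree _ (map_smul _)

theorem IdF_eq_span_mapRange_intCast [CharZero F] :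
    IdF F (F ⊗[ℤ] R) n = Submodule.span F
      ((fun f : PZ n => f.mapRange (Int.cast : ℤ → F) Int.cast_zero) '' IdZModTor R n) :=
  le_antisymm (fun _ => mem_span_mapRange_intCast_of_mem_IdF)
    (Submodule.span_le.mpr <| Set.image_subset_iff.mpr fun _ => mapRange_intCast_mem_IdF)

theorem IdF_eq_map_baseChange [CharZero F] :
    IdF F (F ⊗[ℤ] R) n = ((IdZModTor R n).toIntSubmodule.baseChange F).map
      (TensorProduct.finsuppScalarRight ℤ F F (Equiv.Perm (Fin (n + 1))) :
        F ⊗[ℤ] PZ n →ₗ[F] PF F n) := by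
  rw [IdF_eq_span_mapRange_intCast, Submodule.baseChange_eq_span, Submodule.map_span,
    Submodule.map_coe, ← Set.image_comp]
  congr 2
  ext f σ
  simp

end Assembly

theorem stmt_3 (R F : Type) [NonUnitalRing R] [Field F] [CharP F 0] (n : ℕ) :
    Module.finrank F (PF F n ⧸ IdF F (F ⊗[ℤ] R) n) =
      Module.finrank ℤ (PZ n ⧸ IdZModTor R n) := by
  have : CharZero F := CharP.charP_to_charZero F
  let N := (IdZModTor R n).toIntSubmodule
  let e : F ⊗[ℤ] (PZ n ⧸ N) ≃ₗ[F] PF F n ⧸ IdF F (F ⊗[ℤ] R) n :=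
    (TensorProduct.AlgebraTensorModule.tensorQuotientEquiv F ℤ F N).trans
      (Submodule.Quotient.equiv _ _ _ IdF_eq_map_baseChange.symm)
  rw [← e.finrank_eq, Module.finrank_baseChange]
  -- the `Submodule` and `AddSubgroup` quotients carry the same `ℤ`-module structure
  rfl
end

section
/- Let UT_2(ℚ) denote the ring of upper triangular 2×2 matrices over ℚ, and let I be the two-sided ideal of the free unital associative ℤ-algebra ℤ⟨x_1,x_2,…⟩ on countably many generators generated by all elements (ab − ba)(cd − dc) with a,b,c,d ∈ ℤ⟨x_1,x_2,…⟩ (i.e., all substitution instances of [x_1,x_2][x_3,x_4]). Then for every n ≥ 1, P_n(ℤ) ∩ Id(UT_2(ℚ),ℤ) = P_n(ℤ) ∩ I. In other words, the multilinear polynomial identities of UT_2(ℚ) as a ring are exactly the multilinear consequences of [x,y][z,t] ≡ 0. -/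
/-- The free unital associative ring `ℤ⟨x_1, x_2, …⟩` on countably many
(0-indexed) variables. -/
abbrev FA : Type := FreeAlgebra ℤ ℕ

/-- The variable `x_{i+1}` (0-indexed: `X i`). -/
noncomputable def X (i : ℕ) : FA := FreeAlgebra.ι ℤ i

/-- `P_n(ℤ)`: the additive subgroup of `ℤ⟨X⟩` generated by the multilinear monomials
`x_{σ(1)} x_{σ(2)} ⋯ x_{σ(n)}`, `σ ∈ S_n` (variables 0-indexed). -/
noncomputable def Pn (n : ℕ) : AddSubgroup FA :=
  AddSubgroup.closure
    {w | ∃ σ : Equiv.Perm (Fin n), w = (List.ofFn fun i => X (σ i)).prod}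

/-- `Id(R, ℤ)` (inside the free algebra): the elements vanishing under every
substitution of elements of `R` for the variables. -/
noncomputable def IdA (R : Type*) [Ring R] : AddSubgroup FA where
  carrier := {f | ∀ v : ℕ → R, FreeAlgebra.lift ℤ v f = 0}
  zero_mem' := fun v => map_zero _
  add_mem' := fun hf hg v => by rw [map_add, hf v, hg v, add_zero]
  neg_mem' := fun hf v => by rw [map_neg, hf v, neg_zero]

/-- Left-normed iterated commutator: `commList a [b₁, …, b_k] = [a, b₁, …, b_k]`
(`commList a [] = a`), where `[a,b] = ab - ba`. -/
def commList {A : Type*} [NonUnitalRing A] : A → List A → A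
  | a, [] => a
  | a, b :: l => commList (a * b - b * a) l

/-- The left-normed long commutator `[x_{i₁}, …, x_{i_k}]` of a list of variable
indices (junk value `0` for the empty list). -/
noncomputable def lcWord : List ℕ → FA
  | [] => 0
  | a :: l => commList (X a) l

/-- `Γ_n(ℤ)`: the additive subgroup of `P_n(ℤ)` generated by the proper multilinear
polynomials: products `c₁ c₂ ⋯ c_r` of long commutators (each of length ≥ 2) in which
each of the `n` variables occurs exactly once. -/
noncomputable def Gamma (n : ℕ) : AddSubgroup FA :=
  AddSubgroup.closure
    {w | ∃ L : List (List (Fin n)),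
      (∀ l ∈ L, 2 ≤ l.length) ∧ L.flatten.Perm (List.finRange n) ∧
      w = (L.map fun l => lcWord (l.map Fin.val)).prod}

/-- The two-sided ideal of the (unital) ring `FA` generated by a set `S`:
the additive subgroup generated by all products `a * s * b`, `s ∈ S`. -/
noncomputable def tsIdeal (S : Set FA) : AddSubgroup FA :=
  AddSubgroup.closure {w | ∃ a s b : FA, s ∈ S ∧ w = a * s * b}

/-- Renaming of variables: the endomorphism of `FA` sending `x_i ↦ x_{π(i)}` for the
first `n` variables (and fixing the remaining ones), for `π ∈ S_n`. -/
noncomputable def rename {n : ℕ} (π : Equiv.Perm (Fin n)) : FA →ₐ[ℤ] FA :=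
  FreeAlgebra.lift ℤ (fun i => if h : i < n then X (π ⟨i, h⟩) else X i)

/-- The ring of upper triangular `2 × 2` matrices over `S`, as a subring of `M_2(S)`. -/
def UT2 (S : Type*) [CommRing S] : Subring (Matrix (Fin 2) (Fin 2) S) where
  carrier := {M | M 1 0 = 0}
  zero_mem' := rfl
  one_mem' := Matrix.one_apply_ne (by decide)
  add_mem' := by
    intro a b ha hb
    show (a + b) 1 0 = 0
    simp only [Matrix.add_apply]
    rw [ha, hb, add_zero]
  neg_mem' := by
    intro a ha
    show (-a) 1 0 = 0
    simp only [Matrix.neg_apply]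
    rw [ha, neg_zero]
  mul_mem' := by
    intro a b ha hb
    show (a * b) 1 0 = 0
    rw [Matrix.mul_apply, Fin.sum_univ_two, ha, hb, zero_mul, mul_zero, add_zero]

/-!
Write `I` for the ideal generated by the values of `[x₁, x₂][x₃, x₄]`. In any ring where
`[a, b][c, d] = 0` identically (such as `ℤ⟨X⟩ ⧸ I`), a long commutator `[a, b, c₁, …, c_r]` is
symmetric in `c₁, …, c_r`, a monomial in front of a commutator may be reordered freely, and
moving the letters of a multilinear monomial past each other produces only terms
`(monomial) · [commutator] · (monomial)`. Pushing the right factors into the commutator and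
normalizing it by antisymmetry and the Jacobi identity writes every multilinear monomial, modulo
`I`, as a `ℤ`-combination of `x₁ ⋯ x_n` and the normal words `x_p [x_j, x_k, x_t, …]` in which
`k` is the smallest index of the commutator.

These words are independent modulo the identities of `UT₂`: since commutators there are strictly
upper triangular, the `(1,2)`-entry of a normal word is a product of diagonal data, and the
substitution `x_j ↦ E₁₂`, `x_i ↦ E₂₂` for the other commutator variables, `x_i ↦ 1` for the rest,
gives `1` on the chosen normal word and `0` on all others.
-/

theorem RingHom.map_lie {A B : Type*} [Ring A] [Ring B] (f : A →+* B) (a b : A) :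
    f ⁅a, b⁆ = ⁅f a, f b⁆ := by
  simp only [Ring.lie_def, map_sub, map_mul]

section CommList

variable {A : Type*} [Ring A]

theorem commList_cons_lie (u b : A) (l : List A) : commList u (b :: l) = commList ⁅u, b⁆ l := by
  rw [commList, Ring.lie_def]

theorem commList_append_singleton (u b : A) (l : List A) :
    commList u (l ++ [b]) = ⁅commList u l, b⁆ := by
  induction l generalizing u with
  | nil => rw [List.nil_append, commList_cons_lie]; rfl
  | cons c l ih => rw [List.cons_append, commList_cons_lie, commList_cons_lie, ih]

theorem commList_sub (u v : A) (l : List A) :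
    commList (u - v) l = commList u l - commList v l := by
  induction l generalizing u v with
  | nil => rfl
  | cons b l ih =>
    have h : ⁅u - v, b⁆ = ⁅u, b⁆ - ⁅v, b⁆ := by simp only [Ring.lie_def]; noncomm_ring
    rw [commList_cons_lie, commList_cons_lie, commList_cons_lie, h, ih]

theorem commList_zero (l : List A) : commList (0 : A) l = 0 := by
  simpa using commList_sub (0 : A) 0 l

theorem commList_neg (u : A) (l : List A) : commList (-u) l = -commList u l := by
  simpa [commList_zero] using commList_sub 0 u l

theorem RingHom.map_commList {B : Type*} [Ring B] (f : A →+* B) (u : A) (l : List A) :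
    f (commList u l) = commList (f u) (l.map f) := by
  induction l generalizing u with
  | nil => rfl
  | cons b l ih => simp only [commList_cons_lie, ih, f.map_lie, List.map_cons]

theorem exists_commList_lie_eq_lie (a b : A) (l : List A) :
    ∃ c d : A, commList ⁅a, b⁆ l = ⁅c, d⁆ := by
  induction l generalizing a b with
  | nil => exact ⟨a, b, rfl⟩
  | cons x l ih => rw [commList_cons_lie]; exact ih _ _

end CommList

section CommutatorProductZero

variable {A : Type*} [Ring A]

theorem lie_mul_mul_lie_eq_zero (hA : ∀ a b c d : A, ⁅a, b⁆ * ⁅c, d⁆ = 0) (a b r c d : A) :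
    ⁅a, b⁆ * r * ⁅c, d⁆ = 0 := by
  have h : ⁅a, b⁆ * r = r * ⁅a, b⁆ + ⁅⁅a, b⁆, r⁆ := by rw [Ring.lie_def ⁅a, b⁆ r]; abel
  rw [h, add_mul, mul_assoc, hA, hA, mul_zero, add_zero]

theorem lie_lie_lie_comm (hA : ∀ a b c d : A, ⁅a, b⁆ * ⁅c, d⁆ = 0) (a b x y : A) :
    ⁅⁅⁅a, b⁆, x⁆, y⁆ = ⁅⁅⁅a, b⁆, y⁆, x⁆ := by
  rw [← sub_eq_zero]
  calc ⁅⁅⁅a, b⁆, x⁆, y⁆ - ⁅⁅⁅a, b⁆, y⁆, x⁆ = ⁅a, b⁆ * ⁅x, y⁆ - ⁅x, y⁆ * ⁅a, b⁆ := by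
        simp only [Ring.lie_def]; noncomm_ring
    _ = 0 := by rw [hA, hA, sub_zero]

theorem commList_lie_perm (hA : ∀ a b c d : A, ⁅a, b⁆ * ⁅c, d⁆ = 0) {l l' : List A}
    (h : l.Perm l') (a b : A) : commList ⁅a, b⁆ l = commList ⁅a, b⁆ l' := by
  induction h generalizing a b with
  | nil => rfl
  | cons x _ ih => simp only [commList_cons_lie, ih]
  | swap x y l => simp only [commList_cons_lie, lie_lie_lie_comm hA]
  | trans _ _ ih₁ ih₂ => rw [ih₁, ih₂]

theorem prod_mul_lie_perm (hA : ∀ a b c d : A, ⁅a, b⁆ * ⁅c, d⁆ = 0) {l l' : List A}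
    (h : l.Perm l') (c d : A) : l.prod * ⁅c, d⁆ = l'.prod * ⁅c, d⁆ := by
  induction h with
  | nil => rfl
  | cons x _ ih => simp only [List.prod_cons, mul_assoc, ih]
  | swap x y l =>
    rw [← sub_eq_zero]
    calc (y :: x :: l).prod * ⁅c, d⁆ - (x :: y :: l).prod * ⁅c, d⁆
        = ⁅y, x⁆ * l.prod * ⁅c, d⁆ := by simp only [List.prod_cons, Ring.lie_def]; noncomm_ring
      _ = 0 := lie_mul_mul_lie_eq_zero hA _ _ _ _ _
  | trans _ _ ih₁ ih₂ => rw [ih₁, ih₂]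

end CommutatorProductZero

@[ext] structure NormalIdx (n : ℕ) where
  head : Fin n
  pivot : Fin n
  tail : Finset (Fin n)
  pivot_lt_head : pivot < head
  pivot_lt_tail : ∀ i ∈ tail, pivot < i
  head_notMem_tail : head ∉ tail

namespace NormalIdx

variable {n : ℕ}

noncomputable instance : Fintype (NormalIdx n) :=
  Fintype.ofInjective (fun x => (x.head, x.pivot, x.tail)) fun x y h => by
    simp only [Prod.mk.injEq] at h
    exact NormalIdx.ext h.1 h.2.1 h.2.2

def support (x : NormalIdx n) : Finset (Fin n) := insert x.head (insert x.pivot x.tail)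

theorem pivot_le_of_mem_support (x : NormalIdx n) {i : Fin n} (hi : i ∈ x.support) :
    x.pivot ≤ i := by
  simp only [support, Finset.mem_insert] at hi
  rcases hi with rfl | rfl | hi
  exacts [x.pivot_lt_head.le, le_rfl, (x.pivot_lt_tail i hi).le]

theorem pivot_eq_of_support_eq {x y : NormalIdx n} (hs : x.support = y.support) :
    x.pivot = y.pivot :=
  le_antisymm (x.pivot_le_of_mem_support (hs ▸ by simp [support]))
    (y.pivot_le_of_mem_support (hs ▸ by simp [support]))

theorem ext_of_support {x y : NormalIdx n} (hs : x.support = y.support) (hh : x.head = y.head) :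
    x = y := by
  have hp := pivot_eq_of_support_eq hs
  have mem_tail (z : NormalIdx n) (i : Fin n) :
      i ∈ z.tail ↔ i ∈ z.support ∧ i ≠ z.head ∧ i ≠ z.pivot := by
    simp only [support, Finset.mem_insert]
    constructor
    · intro hi
      exact ⟨.inr (.inr hi), fun h => z.head_notMem_tail (h ▸ hi),
        (z.pivot_lt_tail i hi).ne'⟩
    · rintro ⟨h | h | h, hh, hp⟩
      exacts [absurd h hh, absurd h hp, h]
  exact NormalIdx.ext hh hp (Finset.ext fun i => by rw [mem_tail, mem_tail, hs, hh, hp])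

end NormalIdx

noncomputable def normalWord {A : Type*} [Ring A] {n : ℕ} (y : Fin n → A) :
    Option (NormalIdx n) → A
  | none => ((List.finRange n).map y).prod
  | some x =>
    (x.supportᶜ.toList.map y).prod * commList ⁅y x.head, y x.pivot⁆ (x.tail.toList.map y)

theorem RingHom.map_normalWord {A B : Type*} [Ring A] [Ring B] (f : A →+* B) {n : ℕ}
    (y : Fin n → A) (x : Option (NormalIdx n)) : f (normalWord y x) = normalWord (f ∘ y) x := by
  cases x <;> simp [normalWord, map_list_prod, f.map_commList, f.map_lie, List.map_map]

theorem List.mem_iff_notMem_of_append_perm_finRange {n : ℕ} {p q : List (Fin n)}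
    (h : (p ++ q).Perm (List.finRange n)) (i : Fin n) : i ∈ p ↔ i ∉ q := by
  have hnd := (List.nodup_append.1 (h.nodup_iff.2 (List.nodup_finRange n))).2.2
  have hi : i ∈ p ++ q := h.mem_iff.2 (List.mem_finRange i)
  exact ⟨fun hp hq => hnd i hp i hq rfl, fun hq => (List.mem_append.1 hi).resolve_right hq⟩

section Spanning

variable {A : Type*} [Ring A] {n : ℕ}

theorem prod_mul_commList_mem_span_of_le (hA : ∀ a b c d : A, ⁅a, b⁆ * ⁅c, d⁆ = 0)
    (y : Fin n → A) {p t : List (Fin n)} {a b : Fin n}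
    (h : (p ++ a :: b :: t).Perm (List.finRange n)) (hb : ∀ i ∈ a :: b :: t, b ≤ i) :
    (p.map y).prod * commList ⁅y a, y b⁆ (t.map y) ∈
      Submodule.span ℤ (Set.range (normalWord y)) := by
  obtain ⟨hpnd, hqnd, -⟩ := List.nodup_append.1 (h.nodup_iff.2 (List.nodup_finRange n))
  obtain ⟨⟨hab, hat⟩, hbt, htnd⟩ : (a ≠ b ∧ a ∉ t) ∧ b ∉ t ∧ t.Nodup := by simpa using hqnd
  have hlt (i : Fin n) (hi : i ∈ a :: t) (hib : i ≠ b) : b < i :=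
    (hb i (by simp_all)).lt_of_ne' hib
  let x : NormalIdx n := ⟨a, b, t.toFinset, hlt a (by simp) hab,
    fun i hi => hlt i (by simp_all) (fun h => hbt (h ▸ List.mem_toFinset.1 hi)), by simpa using hat⟩
  have htail : (t.map y).Perm (x.tail.toList.map y) := ((List.toFinset_toList htnd).symm).map y
  have hpre : (p.map y).Perm (x.supportᶜ.toList.map y) := by
    refine List.Perm.map y ((List.perm_ext_iff_of_nodup hpnd (Finset.nodup_toList _)).2 fun i => ?_)
    rw [List.mem_iff_notMem_of_append_perm_finRange h]
    simp [x, NormalIdx.support]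
  obtain ⟨c, d, hcd⟩ := exists_commList_lie_eq_lie (y a) (y b) (t.map y)
  refine Submodule.subset_span ⟨some x, ?_⟩
  rw [normalWord, ← commList_lie_perm hA htail, hcd, prod_mul_lie_perm hA hpre]

theorem prod_mul_commList_mem_span (hA : ∀ a b c d : A, ⁅a, b⁆ * ⁅c, d⁆ = 0)
    (y : Fin n → A) {p t : List (Fin n)} {a b : Fin n}
    (h : (p ++ a :: b :: t).Perm (List.finRange n)) :
    (p.map y).prod * commList ⁅y a, y b⁆ (t.map y) ∈
      Submodule.span ℤ (Set.range (normalWord y)) := by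
  set m := (a :: b :: t).toFinset.min' ⟨a, by simp⟩
  have hm : m ∈ a :: b :: t := List.mem_toFinset.1 (Finset.min'_mem _ _)
  have hmin {q : List (Fin n)} (hq : q.Perm (a :: b :: t)) : ∀ i ∈ q, m ≤ i :=
    fun i hi => Finset.min'_le _ _ (List.mem_toFinset.2 (hq.mem_iff.1 hi))
  rcases List.mem_cons.1 hm with hma | hm
  · have hskew : ⁅y a, y b⁆ = -⁅y b, y a⁆ := by simp only [Ring.lie_def]; noncomm_ring
    rw [hskew, commList_neg, mul_neg]
    refine neg_mem (prod_mul_commList_mem_span_of_le hA y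
      (((List.Perm.swap a b t).append_left p).trans h) ?_)
    exact fun i hi => hma ▸ hmin (List.Perm.swap a b t) i hi
  rcases List.mem_cons.1 hm with hmb | hmt
  · exact prod_mul_commList_mem_span_of_le hA y h fun i hi => hmb ▸ hmin (.refl _) i hi
  -- The minimum `m` sits in the tail; the Jacobi identity moves it to the second position.
  have ht : t.Perm (m :: t.erase m) := List.perm_cons_erase hmt
  have hjacobi : ⁅⁅y a, y b⁆, y m⁆ = ⁅⁅y a, y m⁆, y b⁆ - ⁅⁅y b, y m⁆, y a⁆ := by
    simp only [Ring.lie_def]; noncomm_ring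
  have hbm : (a :: b :: m :: t.erase m).Perm (a :: b :: t) := (ht.symm.cons b).cons a
  have hpa : (a :: m :: b :: t.erase m).Perm (a :: b :: t) :=
    ((List.Perm.swap b m _).cons a).trans hbm
  have hpb : (b :: m :: a :: t.erase m).Perm (a :: b :: t) :=
    ((List.Perm.swap a m _).cons b).trans ((List.Perm.swap a b _).trans hbm)
  rw [commList_lie_perm hA (ht.map y), List.map_cons, commList_cons_lie, hjacobi, commList_sub,
    ← commList_cons_lie ⁅y a, y m⁆, ← commList_cons_lie ⁅y b, y m⁆, mul_sub]
  exact sub_mem (prod_mul_commList_mem_span_of_le hA y ((hpa.append_left p).trans h) (hmin hpa))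
    (prod_mul_commList_mem_span_of_le hA y ((hpb.append_left p).trans h) (hmin hpb))

theorem prod_mul_commList_mul_prod_mem_span (hA : ∀ a b c d : A, ⁅a, b⁆ * ⁅c, d⁆ = 0)
    (y : Fin n → A) (a b : Fin n) (s : List (Fin n)) :
    ∀ {p t : List (Fin n)}, (p ++ a :: b :: t ++ s).Perm (List.finRange n) →
      (p.map y).prod * commList ⁅y a, y b⁆ (t.map y) * (s.map y).prod ∈
        Submodule.span ℤ (Set.range (normalWord y)) := by
  induction s with
  | nil =>
    intro p t h
    simpa using prod_mul_commList_mem_span hA y (by simpa using h)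
  | cons z s ih =>
    intro p t h
    have hsplit : (p.map y).prod * commList ⁅y a, y b⁆ (t.map y) * ((z :: s).map y).prod =
        ((p ++ [z]).map y).prod * commList ⁅y a, y b⁆ (t.map y) * (s.map y).prod +
          (p.map y).prod * commList ⁅y a, y b⁆ ((t ++ [z]).map y) * (s.map y).prod := by
      simp only [List.map_append, List.map_cons, List.map_nil, commList_append_singleton,
        List.prod_append, List.prod_cons, List.prod_nil, Ring.lie_def]
      noncomm_ring
    rw [hsplit]
    refine add_mem (ih (List.Perm.trans ?_ h)) (ih (by simpa using h))
    simpa using (List.perm_middle (l₁ := a :: b :: t) (l₂ := s) (a := z)).symm.append_left p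

theorem prod_sub_prod_mem_span_of_perm (hA : ∀ a b c d : A, ⁅a, b⁆ * ⁅c, d⁆ = 0)
    (y : Fin n → A) {L L' : List (Fin n)} (hL : L.Perm L') :
    ∀ {p s : List (Fin n)}, (p ++ L ++ s).Perm (List.finRange n) →
      ((p ++ L ++ s).map y).prod - ((p ++ L' ++ s).map y).prod ∈
        Submodule.span ℤ (Set.range (normalWord y)) := by
  induction hL with
  | nil => simp
  | cons x _ ih =>
    intro p s h
    simpa using ih (p := p ++ [x]) (by simpa using h)
  | swap x z l =>
    intro p s h
    have hdiff : ((p ++ z :: x :: l ++ s).map y).prod - ((p ++ x :: z :: l ++ s).map y).prod =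
        (p.map y).prod * commList ⁅y z, y x⁆ ([].map y) * ((l ++ s).map y).prod := by
      simp only [List.map_append, List.map_cons, List.map_nil, List.prod_append, List.prod_cons,
        commList, Ring.lie_def]
      noncomm_ring
    rw [hdiff]
    exact prod_mul_commList_mul_prod_mem_span hA y z x _ (by simpa using h)
  | trans h₁ _ ih₁ ih₂ =>
    intro p s h
    simpa using add_mem (ih₁ h) (ih₂ (((h₁.append_left p).append_right s).symm.trans h))

theorem prod_mem_span_normalWord (hA : ∀ a b c d : A, ⁅a, b⁆ * ⁅c, d⁆ = 0)
    (y : Fin n → A) {L : List (Fin n)} (hL : L.Perm (List.finRange n)) :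
    (L.map y).prod ∈ Submodule.span ℤ (Set.range (normalWord y)) := by
  have hdiff := prod_sub_prod_mem_span_of_perm hA y hL (p := []) (s := []) (by simpa using hL)
  simp only [List.nil_append, List.append_nil] at hdiff
  simpa [normalWord] using add_mem hdiff (Submodule.subset_span ⟨none, rfl⟩)

end Spanning

namespace UT2

variable {S : Type*} [CommRing S]

theorem apply_one_zero (M : UT2 S) : (M : Matrix (Fin 2) (Fin 2) S) 1 0 = 0 := M.2

def mk (a b c : S) : UT2 S := ⟨!![a, c; 0, b], rfl⟩

def entry00 : UT2 S →+* S where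
  toFun M := (M : Matrix (Fin 2) (Fin 2) S) 0 0
  map_one' := rfl
  map_mul' M N := by
    simp [Matrix.mul_apply, Fin.sum_univ_two, apply_one_zero]
  map_zero' := rfl
  map_add' _ _ := rfl

def entry11 : UT2 S →+* S where
  toFun M := (M : Matrix (Fin 2) (Fin 2) S) 1 1
  map_one' := rfl
  map_mul' M N := by
    simp [Matrix.mul_apply, Fin.sum_univ_two, apply_one_zero]
  map_zero' := rfl
  map_add' _ _ := rfl

def entry01 : UT2 S →+ S where
  toFun M := (M : Matrix (Fin 2) (Fin 2) S) 0 1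
  map_zero' := rfl
  map_add' _ _ := rfl

@[simp] theorem entry00_mk (a b c : S) : entry00 (mk a b c) = a := rfl
@[simp] theorem entry11_mk (a b c : S) : entry11 (mk a b c) = b := rfl
@[simp] theorem entry01_mk (a b c : S) : entry01 (mk a b c) = c := rfl

theorem ext_entry {M N : UT2 S} (h00 : entry00 M = entry00 N) (h11 : entry11 M = entry11 N)
    (h01 : entry01 M = entry01 N) : M = N := by
  apply Subtype.ext
  ext i j
  fin_cases i <;> fin_cases j
  exacts [h00, h01, by simp [apply_one_zero], h11]

theorem entry01_mul (M N : UT2 S) :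
    entry01 (M * N) = entry00 M * entry01 N + entry01 M * entry11 N := by
  show ((M * N : UT2 S) : Matrix (Fin 2) (Fin 2) S) 0 1 =
    (M : Matrix (Fin 2) (Fin 2) S) 0 0 * (N : Matrix (Fin 2) (Fin 2) S) 0 1 +
      (M : Matrix (Fin 2) (Fin 2) S) 0 1 * (N : Matrix (Fin 2) (Fin 2) S) 1 1
  simp [Matrix.mul_apply, Fin.sum_univ_two]

theorem entry00_lie (M N : UT2 S) : entry00 ⁅M, N⁆ = 0 := by
  rw [Ring.lie_def, map_sub, map_mul, map_mul, mul_comm, sub_self]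

theorem entry11_lie (M N : UT2 S) : entry11 ⁅M, N⁆ = 0 := by
  rw [Ring.lie_def, map_sub, map_mul, map_mul, mul_comm, sub_self]

theorem entry01_lie (M N : UT2 S) : entry01 ⁅M, N⁆ =
    entry01 M * (entry11 N - entry00 N) - entry01 N * (entry11 M - entry00 M) := by
  rw [Ring.lie_def, map_sub, entry01_mul, entry01_mul]
  ring

theorem lie_mul_lie_eq_zero (a b c d : UT2 S) : ⁅a, b⁆ * ⁅c, d⁆ = 0 := by
  apply ext_entry
  · rw [map_mul, entry00_lie, zero_mul, map_zero]
  · rw [map_mul, entry11_lie, zero_mul, map_zero]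
  · rw [entry01_mul, entry00_lie, entry11_lie, zero_mul, mul_zero, add_zero, map_zero]

theorem entry11_commList_lie (a b : UT2 S) (l : List (UT2 S)) :
    entry11 (commList ⁅a, b⁆ l) = 0 := by
  obtain ⟨c, d, h⟩ := exists_commList_lie_eq_lie a b l
  rw [h, entry11_lie]

theorem entry01_commList_lie (a b : UT2 S) (l : List (UT2 S)) :
    entry01 (commList ⁅a, b⁆ l) = entry01 ⁅a, b⁆ * (l.map fun M => entry11 M - entry00 M).prod := by
  induction l generalizing a b with
  | nil => simp [commList]
  | cons M l ih =>
    rw [commList_cons_lie, ih, entry01_lie ⁅a, b⁆, entry00_lie, entry11_lie, List.map_cons,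
      List.prod_cons]
    ring

end UT2

section Independence

open UT2

variable {S : Type*} [CommRing S] {n : ℕ}

theorem entry01_normalWord (w : Fin n → UT2 S) (x : NormalIdx n) :
    entry01 (normalWord w (some x)) = (∏ i ∈ x.supportᶜ, entry00 (w i)) *
      entry01 ⁅w x.head, w x.pivot⁆ * ∏ i ∈ x.tail, (entry11 (w i) - entry00 (w i)) := by
  rw [normalWord, entry01_mul, entry11_commList_lie, mul_zero, add_zero, entry01_commList_lie,
    map_list_prod, List.map_map, List.map_map, Finset.prod_map_toList, mul_assoc]
  exact congrArg _ (congrArg _ (Finset.prod_map_toList _ _))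

/-- `x_head ↦ E₁₂`, the rest of the support of `x` ↦ `E₂₂`, everything else ↦ `1`. -/
def testPoint (x : NormalIdx n) (i : Fin n) : UT2 S :=
  mk (if i ∈ x.support then 0 else 1) (if i = x.head then 0 else 1) (if i = x.head then 1 else 0)

theorem entry01_normalWord_testPoint_self (x : NormalIdx n) :
    entry01 (normalWord (testPoint (S := S) x) (some x)) = 1 := by
  have hp : x.pivot ≠ x.head := x.pivot_lt_head.ne
  rw [entry01_normalWord, entry01_lie]
  simp only [testPoint, entry00_mk, entry11_mk, entry01_mk]
  rw [Finset.prod_eq_one fun i hi => if_neg (Finset.mem_compl.1 hi),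
    Finset.prod_eq_one fun i hi => ?_]
  · simp [hp, NormalIdx.support]
  · have hih : i ≠ x.head := fun h => x.head_notMem_tail (h ▸ hi)
    simp [hih, NormalIdx.support, hi]

theorem entry01_normalWord_testPoint_of_ne {x y : NormalIdx n} (hyx : y ≠ x) :
    entry01 (normalWord (testPoint (S := S) x) (some y)) = 0 := by
  have hxh : x.head ∈ x.support := by simp [NormalIdx.support]
  rw [entry01_normalWord, entry01_lie]
  simp only [testPoint, entry00_mk, entry11_mk, entry01_mk]
  by_contra hne
  have hpre := left_ne_zero_of_mul (left_ne_zero_of_mul hne)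
  have hbr := right_ne_zero_of_mul (left_ne_zero_of_mul hne)
  have htl := right_ne_zero_of_mul hne
  have hxy : x.support ⊆ y.support := fun i hi => by
    by_contra h
    exact hpre (Finset.prod_eq_zero (Finset.mem_compl.2 h) (if_pos hi))
  have htail : ∀ i ∈ y.tail, i ∈ x.support := fun i hi => by
    by_contra h
    have hih : i ≠ x.head := fun e => h (e ▸ hxh)
    exact htl (Finset.prod_eq_zero hi (by rw [if_neg hih, if_neg h, sub_self]))
  have hhp :
      (y.head = x.head ∧ y.pivot ∈ x.support) ∨ (y.pivot = x.head ∧ y.head ∈ x.support) := by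
    by_cases hh : y.head = x.head
    · have hp : y.pivot ≠ x.head := hh ▸ y.pivot_lt_head.ne
      exact .inl ⟨hh, by_contra fun h => hbr (by simp [hh, hp, h])⟩
    · refine .inr ⟨by_contra fun hp => hbr (by simp [hh, hp]), by_contra fun h => hbr ?_⟩
      simp [hh, h]
  have hyx' : y.support ⊆ x.support := by
    intro i hi
    simp only [NormalIdx.support, Finset.mem_insert] at hi
    rcases hi with rfl | rfl | hi
    · rcases hhp with ⟨h, -⟩ | ⟨-, h⟩
      exacts [h ▸ hxh, h]
    · rcases hhp with ⟨-, h⟩ | ⟨h, -⟩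
      exacts [h, h ▸ hxh]
    · exact htail i hi
  have hs : y.support = x.support := hyx'.antisymm hxy
  refine hyx (NormalIdx.ext_of_support hs (hhp.resolve_right fun h => ?_).1)
  exact x.pivot_lt_head.ne (NormalIdx.pivot_eq_of_support_eq hs ▸ h.1)

theorem eq_zero_of_forall_sum_smul_normalWord_eq_zero [CharZero S] {c : Option (NormalIdx n) → ℤ}
    (h : ∀ w : Fin n → UT2 S, ∑ x, c x • normalWord w x = 0) : c = 0 := by
  have hnone : c none = 0 := by
    have h1 := congrArg entry00 (h fun _ => 1)
    simpa [Fintype.sum_option, normalWord, Ring.lie_def, commList_zero] using h1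
  funext x
  cases x with
  | none => exact hnone
  | some x =>
    have h1 := congrArg entry01 (h (testPoint x))
    rw [map_sum, Fintype.sum_option, hnone, zero_smul, map_zero, zero_add,
      Finset.sum_eq_single x (fun y _ hyx => by
        rw [map_zsmul, entry01_normalWord_testPoint_of_ne hyx, smul_zero])
      (fun h => absurd (Finset.mem_univ x) h), map_zsmul, entry01_normalWord_testPoint_self] at h1
    simpa using h1

end Independence

theorem mem_tsIdeal_iff_mem_span (S : Set FA) (f : FA) :
    f ∈ tsIdeal S ↔ f ∈ TwoSidedIdeal.span S := by
  rw [TwoSidedIdeal.mem_span_iff_mem_addSubgroup_closure, tsIdeal]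
  congr! 2
  ext w
  simp only [Set.mem_mul, Set.mem_univ, true_and]
  constructor
  · rintro ⟨a, s, b, hs, hw⟩
    exact ⟨a * s, ⟨a, s, hs, rfl⟩, b, hw.symm⟩
  · rintro ⟨x, ⟨a, s, hs, hx⟩, b, hw⟩
    exact ⟨a, s, b, hs, by rw [← hw, ← hx]⟩

def commProdSet : Set FA := {w | ∃ a b c d : FA, w = (a * b - b * a) * (c * d - d * c)}

theorem mem_IdA_of_mem_span_commProdSet {R : Type*} [Ring R]
    (hR : ∀ a b c d : R, ⁅a, b⁆ * ⁅c, d⁆ = 0) {f : FA} (hf : f ∈ TwoSidedIdeal.span commProdSet) :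
    f ∈ IdA R := by
  intro v
  refine (TwoSidedIdeal.mem_ker (FreeAlgebra.lift ℤ v)).1 (TwoSidedIdeal.span_le.2 ?_ hf)
  rintro _ ⟨a, b, c, d, rfl⟩
  rw [SetLike.mem_coe, TwoSidedIdeal.mem_ker]
  simpa only [map_mul, map_sub, Ring.lie_def] using hR (FreeAlgebra.lift ℤ v a) _ _ _

theorem lie_mul_lie_eq_zero_quotient (a b c d : (TwoSidedIdeal.span commProdSet).ringCon.Quotient) :
    ⁅a, b⁆ * ⁅c, d⁆ = 0 := by
  set π := (TwoSidedIdeal.span commProdSet).ringCon.mk'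
  obtain ⟨a, rfl⟩ := RingCon.mk'_surjective _ a
  obtain ⟨b, rfl⟩ := RingCon.mk'_surjective _ b
  obtain ⟨c, rfl⟩ := RingCon.mk'_surjective _ c
  obtain ⟨d, rfl⟩ := RingCon.mk'_surjective _ d
  rw [← π.map_lie, ← π.map_lie, ← map_mul, ← TwoSidedIdeal.mem_ker, TwoSidedIdeal.ker_ringCon_mk']
  exact TwoSidedIdeal.subset_span ⟨a, b, c, d, by simp only [Ring.lie_def]⟩

theorem exists_sub_mem_span_commProdSet_of_mem_Pn {n : ℕ} {f : FA} (hf : f ∈ Pn n) :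
    ∃ g ∈ Submodule.span ℤ (Set.range (normalWord (X ∘ Fin.val : Fin n → FA))),
      f - g ∈ TwoSidedIdeal.span commProdSet := by
  set π := (TwoSidedIdeal.span commProdSet).ringCon.mk'
  have hrange : Set.range (normalWord (π ∘ X ∘ Fin.val : Fin n → _)) =
      π.toAddMonoidHom.toIntLinearMap '' Set.range (normalWord (X ∘ Fin.val : Fin n → FA)) := by
    rw [← Set.range_comp]
    exact congrArg Set.range (funext fun x => (π.map_normalWord _ x).symm)
  have hπf : π f ∈ Submodule.span ℤ (Set.range (normalWord (π ∘ X ∘ Fin.val : Fin n → _))) := by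
    refine (AddSubgroup.closure_le
      (K := (Submodule.span ℤ _).toAddSubgroup.comap π.toAddMonoidHom)).2 ?_ hf
    rintro _ ⟨σ, rfl⟩
    have hσ : (List.ofFn σ).Perm (List.finRange n) := List.ofFn_id n ▸ σ.ofFn_comp_perm id
    have h := prod_mem_span_normalWord lie_mul_lie_eq_zero_quotient (π ∘ X ∘ Fin.val) hσ
    rw [List.map_ofFn] at h
    rw [SetLike.mem_coe, AddSubgroup.mem_comap, RingHom.toAddMonoidHom_eq_coe,
      AddMonoidHom.coe_coe, map_list_prod, List.map_ofFn]
    exact h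
  rw [hrange, ← Submodule.map_span] at hπf
  obtain ⟨g, hg, hgf⟩ := hπf
  refine ⟨g, hg, ?_⟩
  rw [← TwoSidedIdeal.rel_iff, ← RingCon.eq]
  exact hgf.symm

theorem eq_zero_of_mem_span_normalWord_of_mem_IdA {n : ℕ} {g : FA}
    (hg : g ∈ Submodule.span ℤ (Set.range (normalWord (X ∘ Fin.val : Fin n → FA))))
    (hId : g ∈ IdA (UT2 ℚ)) : g = 0 := by
  obtain ⟨c, rfl⟩ := (Submodule.mem_span_range_iff_exists_fun ℤ).1 hg
  suffices c = 0 by simp [this]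
  refine eq_zero_of_forall_sum_smul_normalWord_eq_zero (S := ℚ) fun w => ?_
  have hv := hId fun i => if h : i < n then w ⟨i, h⟩ else 0
  rw [map_sum] at hv
  convert hv using 2 with x
  rw [map_zsmul, ← AlgHom.coe_toRingHom, RingHom.map_normalWord]
  congr 2
  funext i
  simp [X]

theorem stmt_13_general (n : ℕ) :
    ∀ f ∈ Pn n,
      (f ∈ IdA (UT2 ℚ) ↔
        f ∈ tsIdeal {w | ∃ a b c d : FA, w = (a * b - b * a) * (c * d - d * c)}) := by
  intro f hf
  rw [mem_tsIdeal_iff_mem_span]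
  refine ⟨fun hId => ?_, mem_IdA_of_mem_span_commProdSet UT2.lie_mul_lie_eq_zero⟩
  obtain ⟨g, hg, hfg⟩ := exists_sub_mem_span_commProdSet_of_mem_Pn hf
  have hg0 : g = 0 := eq_zero_of_mem_span_normalWord_of_mem_IdA hg <| by
    simpa using sub_mem hId (mem_IdA_of_mem_span_commProdSet UT2.lie_mul_lie_eq_zero hfg)
  rwa [hg0, sub_zero] at hfg

theorem stmt_13 (n : ℕ) (hn : 1 ≤ n) :
    ∀ f ∈ Pn n,
      (f ∈ IdA (UT2 ℚ) ↔
        f ∈ tsIdeal {w | ∃ a b c d : FA, w = (a * b - b * a) * (c * d - d * c)}) :=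
  stmt_13_general n
end

section
/- Let A be a (not necessarily unital) associative ring in which all triple commutators vanish, i.e., [[a,b],c] = 0 for all a,b,c ∈ A, where [a,b] = ab − ba. Then for all x,y,z,t,u ∈ A we have [y,x][z,t] + [y,z][x,t] = 0 and [x,y]u[z,t] + [x,t]u[z,y] = 0. -/
theorem stmt_16 (A : Type) [NonUnitalRing A]
    (h : ∀ a b c : A, (a * b - b * a) * c - c * (a * b - b * a) = 0) :
    (∀ x y z t : A,
      (y * x - x * y) * (z * t - t * z) + (y * z - z * y) * (x * t - t * x) = 0) ∧
    (∀ x y z t u : A,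
      (x * y - y * x) * u * (z * t - t * z) + (x * t - t * x) * u * (z * y - y * z) = 0) := by
  have p1 : ∀ x y z t : A,
      (y * x - x * y) * (z * t - t * z) + (y * z - z * y) * (x * t - t * x) = 0 := by
    intro x y z t
    linear_combination (norm := noncomm_ring)
      h y (x*z) t - (h y x t) * z - x * (h y z t) - h x t (y*z) + h x t (z*y)
  refine ⟨p1, fun x y z t u => ?_⟩
  linear_combination (norm := noncomm_ring)
    (p1 y x z t) * u + (p1 t x z y) * u - (x*y - y*x) * (h z t u) - (x*t - t*x) * (h z y u)
end

section
/- Let R be a commutative unital ring whose characteristic ℓ is either an odd positive integer or 0, and let G_R be the Grassmann algebra over R, realized as the exterior algebra of the free R-module on a countably infinite basis e_1, e_2, …. Then [[a,b],c] = 0 for all a,b,c ∈ G_R, where [a,b] = ab − ba; that is, [x,y,z] ≡ 0 is a polynomial identity of G_R. -/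
open ExteriorAlgebra CliffordAlgebra

section aux
variable {R : Type} [CommRing R] {M : Type} [AddCommGroup M] [Module R M]

lemma aux_L1 (m : M) (x : ExteriorAlgebra R M) :
    ι R m * x = involute x * ι R m := by
  induction x using CliffordAlgebra.induction with
  | algebraMap r => simp [Algebra.commutes]
  | ι n =>
      have h := ExteriorAlgebra.ι_add_mul_swap (R := R) m n
      rw [involute_ι, neg_mul]
      exact eq_neg_of_add_eq_zero_left h
  | mul x y hx hy =>
      rw [map_mul, ← mul_assoc, hx, mul_assoc, hy, ← mul_assoc]
  | add x y hx hy => rw [map_add, mul_add, add_mul, hx, hy]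

lemma aux_decomp (a : ExteriorAlgebra R M) :
    ∃ a0 a1 : ExteriorAlgebra R M, a = a0 + a1 ∧
      (∀ w, a0 * w = w * a0) ∧ (∀ w, a1 * w = involute w * a1) := by
  induction a using CliffordAlgebra.induction with
  | algebraMap r =>
      exact ⟨algebraMap R _ r, 0, by simp, fun w => (Algebra.commutes r w).symm ▸
        (Algebra.commutes r w), by simp⟩
  | ι m =>
      exact ⟨0, ι R m, by simp, by simp, fun w => aux_L1 m w⟩
  | add x y hx hy =>
      obtain ⟨x0, x1, rfl, hx0, hx1⟩ := hx
      obtain ⟨y0, y1, rfl, hy0, hy1⟩ := hy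
      refine ⟨x0 + y0, x1 + y1, by abel, fun w => ?_, fun w => ?_⟩
      · rw [add_mul, mul_add, hx0, hy0]
      · rw [add_mul, mul_add, hx1, hy1]
  | mul x y hx hy =>
      obtain ⟨x0, x1, rfl, hx0, hx1⟩ := hx
      obtain ⟨y0, y1, rfl, hy0, hy1⟩ := hy
      refine ⟨x0 * y0 + x1 * y1, x0 * y1 + x1 * y0, by
        rw [add_mul, mul_add, mul_add]; abel, fun w => ?_, fun w => ?_⟩
      · have h1 : x0 * y0 * w = w * (x0 * y0) := by
          rw [mul_assoc, hy0, ← mul_assoc, hx0, mul_assoc]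
        have h2 : x1 * y1 * w = w * (x1 * y1) := by
          rw [mul_assoc, hy1, ← mul_assoc, hx1, involute_involute, mul_assoc]
        rw [add_mul, mul_add, h1, h2]
      · have h1 : x0 * y1 * w = involute w * (x0 * y1) := by
          rw [mul_assoc, hy1, ← mul_assoc, hx0, mul_assoc]
        have h2 : x1 * y0 * w = involute w * (x1 * y0) := by
          rw [mul_assoc, hy0, ← mul_assoc, hx1, mul_assoc]
        rw [add_mul, mul_add, h1, h2]

lemma aux_comm_central (a b w : ExteriorAlgebra R M) :
    (a * b - b * a) * w = w * (a * b - b * a) := by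
  obtain ⟨a0, a1, rfl, ha0, ha1⟩ := aux_decomp a
  obtain ⟨b0, b1, rfl, hb0, hb1⟩ := aux_decomp b
  have key : (a0 + a1) * (b0 + b1) - (b0 + b1) * (a0 + a1)
      = a1 * b1 - b1 * a1 := by
    have e1 : a0 * b0 = b0 * a0 := ha0 b0
    have e2 : a0 * b1 = b1 * a0 := ha0 b1
    have e3 : a1 * b0 = b0 * a1 := (hb0 a1).symm
    rw [add_mul, mul_add, mul_add, add_mul, mul_add, mul_add, e1, e2, e3]
    abel
  rw [key]
  have c1 : a1 * b1 * w = w * (a1 * b1) := by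
    rw [mul_assoc, hb1, ← mul_assoc, ha1, involute_involute, mul_assoc]
  have c2 : b1 * a1 * w = w * (b1 * a1) := by
    rw [mul_assoc, ha1, ← mul_assoc, hb1, involute_involute, mul_assoc]
  rw [sub_mul, mul_sub, c1, c2]

end aux

theorem stmt_17 (R : Type) [CommRing R] (ℓ : ℕ) (hR : CharP R ℓ) (hℓ : ℓ = 0 ∨ Odd ℓ) :
    ∀ a b c : ExteriorAlgebra R (ℕ →₀ R),
      (a * b - b * a) * c - c * (a * b - b * a) = 0 := by
  intro a b c
  rw [aux_comm_central a b c, sub_self]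
end
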